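/- arXiv:1311.1959 — 6 statements merged into one kernel-verified Lean document; each statement's English description precedes it below -/
import Mathlib

section
/- For every r > 0, the superlevel set {θ ∈ ℝ^d : R(θ) ≥ r} of the empirical likelihood ratio is a convex subset of ℝ^d; equivalently, the set {θ ∈ ℝ^d : there exists w ∈ W(θ) with ∏_{i=1}^n n·w_i ≥ r} is convex. -/
noncomputable section

/-- The set of empirical likelihood weight vectors for `θ`:
`W(θ) = {w : wᵢ ≥ 0, Σ wᵢ = 1, Σ wᵢ Xᵢ = θ}`. -/
def Wset (n d : ℕ) (X : Fin n → EuclideanSpace ℝ (Fin d))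
    (θ : EuclideanSpace ℝ (Fin d)) : Set (Fin n → ℝ) :=
  {w | (∀ i, 0 ≤ w i) ∧ ∑ i, w i = 1 ∧ ∑ i, w i • X i = θ}

/-- The empirical likelihood ratio `R(θ) = sup {∏ n·wᵢ : w ∈ W(θ)}` (the sup over
the empty set is `0`, since `Real.sSup ∅ = 0`). -/
def elR (n d : ℕ) (X : Fin n → EuclideanSpace ℝ (Fin d))
    (θ : EuclideanSpace ℝ (Fin d)) : ℝ :=
  sSup ((fun w => ∏ i, (n : ℝ) * w i) '' Wset n d X θ)

/-- The empirical log-likelihood ratio `l(θ) = -2 log R(θ)`. -/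
def elln (n d : ℕ) (X : Fin n → EuclideanSpace ℝ (Fin d))
    (θ : EuclideanSpace ℝ (Fin d)) : ℝ :=
  -2 * Real.log (elR n d X θ)

/-- The sample mean `θ̃ = n⁻¹ Σ Xᵢ`. -/
def sampleMean (n d : ℕ) (X : Fin n → EuclideanSpace ℝ (Fin d)) :
    EuclideanSpace ℝ (Fin d) :=
  (n : ℝ)⁻¹ • ∑ i, X i

/-- The composite similarity mapping `h(θ) = θ̃ + (1 + l(θ)/(2n))(θ - θ̃)`. -/
def csm (n d : ℕ) (X : Fin n → EuclideanSpace ℝ (Fin d))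
    (θ : EuclideanSpace ℝ (Fin d)) : EuclideanSpace ℝ (Fin d) :=
  sampleMean n d X + (1 + elln n d X θ / (2 * n)) • (θ - sampleMean n d X)

theorem key_comb (n d : ℕ) (X : Fin n → EuclideanSpace ℝ (Fin d))
    {θ₁ θ₂ : EuclideanSpace ℝ (Fin d)} {w v : Fin n → ℝ}
    (hw : w ∈ Wset n d X θ₁) (hv : v ∈ Wset n d X θ₂)
    {a b : ℝ} (ha : 0 ≤ a) (hb : 0 ≤ b) (hab : a + b = 1) :
    ((fun i => a * w i + b * v i) ∈ Wset n d X (a • θ₁ + b • θ₂)) ∧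
    (∏ i, (n : ℝ) * w i) ^ a * (∏ i, (n : ℝ) * v i) ^ b
      ≤ ∏ i, (n : ℝ) * (a * w i + b * v i) := by
  obtain ⟨hw0, hw1, hwX⟩ := hw
  obtain ⟨hv0, hv1, hvX⟩ := hv
  have hnw : ∀ i, (0:ℝ) ≤ (n : ℝ) * w i := fun i => mul_nonneg (Nat.cast_nonneg n) (hw0 i)
  have hnv : ∀ i, (0:ℝ) ≤ (n : ℝ) * v i := fun i => mul_nonneg (Nat.cast_nonneg n) (hv0 i)
  refine ⟨⟨fun i => add_nonneg (mul_nonneg ha (hw0 i)) (mul_nonneg hb (hv0 i)), ?_, ?_⟩, ?_⟩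
  · rw [Finset.sum_add_distrib, ← Finset.mul_sum, ← Finset.mul_sum, hw1, hv1]
    simpa using hab
  · simp only [add_smul, mul_smul, Finset.sum_add_distrib, ← Finset.smul_sum, hwX, hvX]
  · calc (∏ i, (n : ℝ) * w i) ^ a * (∏ i, (n : ℝ) * v i) ^ b
        = ∏ i, ((n : ℝ) * w i) ^ a * ((n : ℝ) * v i) ^ b := by
          rw [← Real.finset_prod_rpow _ _ (fun i _ => hnw i) a,
            ← Real.finset_prod_rpow _ _ (fun i _ => hnv i) b, ← Finset.prod_mul_distrib]
      _ ≤ ∏ i, (n : ℝ) * (a * w i + b * v i) := by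
          apply Finset.prod_le_prod
          · intro i _
            exact mul_nonneg (Real.rpow_nonneg (hnw i) a) (Real.rpow_nonneg (hnv i) b)
          · intro i _
            have := Real.geom_mean_le_arith_mean2_weighted ha hb (hnw i) (hnv i) hab
            calc ((n:ℝ) * w i) ^ a * ((n:ℝ) * v i) ^ b
                ≤ a * ((n:ℝ) * w i) + b * ((n:ℝ) * v i) := this
              _ = (n:ℝ) * (a * w i + b * v i) := by ring

theorem elR_bdd (n d : ℕ) (X : Fin n → EuclideanSpace ℝ (Fin d))
    (θ : EuclideanSpace ℝ (Fin d)) :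
    BddAbove ((fun w => ∏ i, (n : ℝ) * w i) '' Wset n d X θ) := by
  refine ⟨(n : ℝ) ^ (n : ℕ), ?_⟩
  rintro x ⟨w, ⟨hw0, hw1, -⟩, rfl⟩
  have hle : ∀ i, w i ≤ 1 := by
    intro i
    calc w i ≤ ∑ j, w j := Finset.single_le_sum (fun j _ => hw0 j) (Finset.mem_univ i)
      _ = 1 := hw1
  calc ∏ i, (n : ℝ) * w i ≤ ∏ _i : Fin n, (n : ℝ) := by
        apply Finset.prod_le_prod (fun i _ => mul_nonneg (Nat.cast_nonneg n) (hw0 i))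
        intro i _
        calc (n:ℝ) * w i ≤ (n:ℝ) * 1 :=
              mul_le_mul_of_nonneg_left (hle i) (Nat.cast_nonneg n)
          _ = (n:ℝ) := mul_one _
    _ = (n : ℝ) ^ (n : ℕ) := by simp

theorem rpow_comb {r p q a b : ℝ} (hr : 0 < r) (hp : r ≤ p) (hq : r ≤ q)
    (ha : 0 ≤ a) (hb : 0 ≤ b) (hab : a + b = 1) : r ≤ p ^ a * q ^ b := by
  have h1 : r ^ a ≤ p ^ a := Real.rpow_le_rpow hr.le hp ha
  have h2 : r ^ b ≤ q ^ b := Real.rpow_le_rpow hr.le hq hb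
  calc r = r ^ a * r ^ b := by rw [← Real.rpow_add hr, hab, Real.rpow_one]
    _ ≤ p ^ a * q ^ b :=
      mul_le_mul h1 h2 (Real.rpow_nonneg hr.le b) (Real.rpow_nonneg (hr.trans_le hp).le a)

/-- For every `r > 0` the superlevel set `{θ : R(θ) ≥ r}` is convex;
equivalently, `{θ : ∃ w ∈ W(θ), ∏ n·wᵢ ≥ r}` is convex. -/
theorem stmt4 (n d : ℕ) (hn : 0 < n) (hd : 0 < d)
    (X : Fin n → EuclideanSpace ℝ (Fin d)) (r : ℝ) (hr : 0 < r) :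
    Convex ℝ {θ : EuclideanSpace ℝ (Fin d) | r ≤ elR n d X θ} ∧
      Convex ℝ {θ : EuclideanSpace ℝ (Fin d) |
        ∃ w ∈ Wset n d X θ, r ≤ ∏ i, (n : ℝ) * w i} := by
  constructor
  · intro θ₁ hθ₁ θ₂ hθ₂ a b ha hb hab
    simp only [Set.mem_setOf_eq] at hθ₁ hθ₂ ⊢
    refine le_of_forall_lt fun c hc => ?_
    set c0 : ℝ := max ((c + r) / 2) (r / 2) with hc0def
    have hc0pos : 0 < c0 := lt_of_lt_of_le (half_pos hr) (le_max_right _ _)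
    have hcc0 : c < c0 := lt_of_lt_of_le (by linarith) (le_max_left _ _)
    have hc0r : c0 < r := max_lt (by linarith) (by linarith)
    have hne1 : ((fun w => ∏ i, (n : ℝ) * w i) '' Wset n d X θ₁).Nonempty := by
      by_contra h
      rw [Set.not_nonempty_iff_eq_empty] at h
      rw [elR, h, Real.sSup_empty] at hθ₁
      linarith
    have hne2 : ((fun w => ∏ i, (n : ℝ) * w i) '' Wset n d X θ₂).Nonempty := by
      by_contra h
      rw [Set.not_nonempty_iff_eq_empty] at h
      rw [elR, h, Real.sSup_empty] at hθ₂
      linarith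
    obtain ⟨x1, hx1mem, hx1⟩ := exists_lt_of_lt_csSup hne1 (lt_of_lt_of_le hc0r hθ₁)
    obtain ⟨x2, hx2mem, hx2⟩ := exists_lt_of_lt_csSup hne2 (lt_of_lt_of_le hc0r hθ₂)
    obtain ⟨w, hw, rfl⟩ := hx1mem
    obtain ⟨v, hv, rfl⟩ := hx2mem
    obtain ⟨humem, hprod⟩ := key_comb n d X hw hv ha hb hab
    have hstep : c0 ≤ ∏ i, (n : ℝ) * (a * w i + b * v i) :=
      le_trans (rpow_comb hc0pos hx1.le hx2.le ha hb hab) hprod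
    calc c < c0 := hcc0
      _ ≤ ∏ i, (n : ℝ) * (a * w i + b * v i) := hstep
      _ ≤ elR n d X (a • θ₁ + b • θ₂) :=
        le_csSup (elR_bdd n d X _) ⟨_, humem, rfl⟩
  · intro θ₁ hθ₁ θ₂ hθ₂ a b ha hb hab
    obtain ⟨w, hw, hwr⟩ := hθ₁
    obtain ⟨v, hv, hvr⟩ := hθ₂
    obtain ⟨humem, hprod⟩ := key_comb n d X hw hv ha hb hab
    exact ⟨_, humem, le_trans (rpow_comb hr hwr hvr ha hb hab) hprod⟩
end
end

section
/- (Lemma 1) Suppose X_1, …, X_n affinely span ℝ^d. For every fixed θ ∈ Θ_n and every α ∈ [0,1], the empirical likelihood ratio is monotone along the ray from the sample mean: R(θ̃ + α(θ − θ̃)) ≥ R(θ); equivalently, l(θ̃ + α(θ − θ̃)) ≤ l(θ). -/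
noncomputable section

/-!
Mixing a weight vector `w ∈ W(θ)` with the uniform weights gives
`α w + (1 - α) / n ∈ W(θ̃ + α (θ - θ̃))`. By AM–GM, `p i = n w i` satisfies `∏ p ≤ 1`, hence
`∏ p ≤ (∏ p) ^ α = ∏ p ^ α ≤ ∏ (α p + 1 - α)`, so `R` does not decrease along the segment.
Passing to `l = -2 log R` needs `R(θ) > 0`: an interior `θ` is itself such a mixture of the
weights of a point slightly beyond it on the ray, so it has strictly positive weights.
-/

open Finset Filter Topology

theorem prod_card_mul_le_one {ι : Type*} [Fintype ι] (w : ι → ℝ) (hw₀ : ∀ i, 0 ≤ w i)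
    (hw₁ : ∑ i, w i = 1) : ∏ i, (Fintype.card ι : ℝ) * w i ≤ 1 := by
  set N : ℝ := (Fintype.card ι : ℝ)
  have hN : N ≠ 0 := by
    have : Nonempty ι := by
      by_contra h
      simp [not_nonempty_iff.mp h] at hw₁
    positivity
  have hz : ∀ i ∈ univ, 0 ≤ N * w i := fun i _ => mul_nonneg (by positivity) (hw₀ i)
  have hP : 0 ≤ ∏ i, N * w i := prod_nonneg hz
  have amgm := Real.geom_mean_le_arith_mean_weighted univ (fun _ => N⁻¹) (fun i => N * w i)
    (fun _ _ => by positivity) (by simp [N, hN]) hz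
  simp only [← mul_assoc, inv_mul_cancel₀ hN, one_mul, hw₁] at amgm
  rw [Real.finsetProd_rpow _ _ hz] at amgm
  calc ∏ i, N * w i = ((∏ i, N * w i) ^ N⁻¹) ^ Fintype.card ι := by
        rw [← Real.rpow_natCast, ← Real.rpow_mul hP, inv_mul_cancel₀ hN, Real.rpow_one]
    _ ≤ 1 := pow_le_one₀ (by positivity) amgm

theorem prod_le_prod_mix_one {ι : Type*} [Fintype ι] (p : ι → ℝ) (hp₀ : ∀ i, 0 ≤ p i)
    (hp₁ : ∏ i, p i ≤ 1) {α : ℝ} (hα₀ : 0 ≤ α) (hα₁ : α ≤ 1) :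
    ∏ i, p i ≤ ∏ i, (α * p i + (1 - α)) := by
  have hP : 0 ≤ ∏ i, p i := prod_nonneg fun i _ => hp₀ i
  have amgm (i : ι) : p i ^ α ≤ α * p i + (1 - α) := by
    simpa using Real.geom_mean_le_arith_mean2_weighted hα₀ (sub_nonneg.2 hα₁) (hp₀ i)
      zero_le_one (by ring)
  calc ∏ i, p i ≤ (∏ i, p i) ^ α := Real.self_le_rpow_of_le_one hP hp₁ hα₁
    _ = ∏ i, p i ^ α := (Real.finsetProd_rpow _ _ (fun i _ => hp₀ i) _).symm
    _ ≤ ∏ i, (α * p i + (1 - α)) :=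
      prod_le_prod (fun i _ => Real.rpow_nonneg (hp₀ i) _) fun i _ => amgm i

section

variable {n d : ℕ} (X : Fin n → EuclideanSpace ℝ (Fin d))

theorem bddAbove_elR_image (θ : EuclideanSpace ℝ (Fin d)) :
    BddAbove ((fun w => ∏ i, (n : ℝ) * w i) '' Wset n d X θ) := by
  refine ⟨1, ?_⟩
  rintro _ ⟨w, ⟨hw₀, hw₁, -⟩, rfl⟩
  simpa using prod_card_mul_le_one w hw₀ hw₁

theorem prod_le_elR {θ : EuclideanSpace ℝ (Fin d)} {w : Fin n → ℝ} (hw : w ∈ Wset n d X θ) :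
    ∏ i, (n : ℝ) * w i ≤ elR n d X θ :=
  le_csSup (bddAbove_elR_image X θ) ⟨w, hw, rfl⟩

theorem elR_nonneg (θ : EuclideanSpace ℝ (Fin d)) : 0 ≤ elR n d X θ := by
  refine Real.sSup_nonneg ?_
  rintro _ ⟨w, ⟨hw₀, -, -⟩, rfl⟩
  exact prod_nonneg fun i _ => mul_nonneg n.cast_nonneg (hw₀ i)

theorem nonempty_Wset_of_mem_convexHull {θ : EuclideanSpace ℝ (Fin d)}
    (hθ : θ ∈ convexHull ℝ (Set.range X)) : (Wset n d X θ).Nonempty := by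
  classical
  obtain ⟨s, v, hv₀, hv₁, rfl⟩ := (convexHull_range_eq_exists_affineCombination X).subset hθ
  refine ⟨fun i => if i ∈ s then v i else 0, fun i => ?_, ?_, ?_⟩
  · dsimp only
    split_ifs with hi
    exacts [hv₀ i hi, le_rfl]
  · rw [sum_ite_mem, univ_inter, hv₁]
  · simp_rw [ite_smul, zero_smul]
    rw [sum_ite_mem, univ_inter, s.affineCombination_eq_linear_combination X v hv₁]

variable {X}

theorem mix_mem_Wset (hn : n ≠ 0) {θ : EuclideanSpace ℝ (Fin d)} {w : Fin n → ℝ}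
    (hw : w ∈ Wset n d X θ) {α : ℝ} (hα₀ : 0 ≤ α) (hα₁ : α ≤ 1) :
    (fun i => α * w i + (1 - α) / n) ∈
      Wset n d X (sampleMean n d X + α • (θ - sampleMean n d X)) := by
  obtain ⟨hw₀, hw₁, hwθ⟩ := hw
  refine ⟨fun i => by have := hw₀ i; have : 0 ≤ 1 - α := sub_nonneg.2 hα₁; positivity, ?_, ?_⟩
  · simp only [sum_add_distrib, ← mul_sum, hw₁, sum_const, card_univ, Fintype.card_fin,
      nsmul_eq_mul]
    field_simp
    ring
  · simp only [add_smul, sum_add_distrib, ← smul_smul, ← smul_sum, hwθ, sampleMean,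
      div_eq_mul_inv]
    module

theorem elR_le_elR_mix (hn : n ≠ 0) (θ : EuclideanSpace ℝ (Fin d)) {α : ℝ} (hα₀ : 0 ≤ α)
    (hα₁ : α ≤ 1) :
    elR n d X θ ≤ elR n d X (sampleMean n d X + α • (θ - sampleMean n d X)) := by
  refine Real.sSup_le ?_ (elR_nonneg X _)
  rintro _ ⟨w, hw, rfl⟩
  have hmix (i : Fin n) : (n : ℝ) * (α * w i + (1 - α) / n) = α * (n * w i) + (1 - α) := by
    field_simp
  calc ∏ i, (n : ℝ) * w i ≤ ∏ i, (α * (n * w i) + (1 - α)) :=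
        prod_le_prod_mix_one _ (fun i => mul_nonneg n.cast_nonneg (hw.1 i))
          (by simpa using prod_card_mul_le_one w hw.1 hw.2.1) hα₀ hα₁
    _ = ∏ i, (n : ℝ) * (α * w i + (1 - α) / n) := by simp only [hmix]
    _ ≤ _ := prod_le_elR X (mix_mem_Wset hn hw hα₀ hα₁)

theorem exists_pos_mem_Wset (hn : n ≠ 0) {θ : EuclideanSpace ℝ (Fin d)}
    (hθ : θ ∈ interior (convexHull ℝ (Set.range X))) : ∃ w ∈ Wset n d X θ, ∀ i, 0 < w i := by
  set m := sampleMean n d X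
  have hray : ∀ᶠ t in 𝓝 (0 : ℝ), θ + t • (θ - m) ∈ interior (convexHull ℝ (Set.range X)) := by
    have hc : Continuous fun t : ℝ => θ + t • (θ - m) := by fun_prop
    exact hc.continuousAt.preimage_mem_nhds (by simpa using isOpen_interior.mem_nhds hθ)
  obtain ⟨ε, hεmem, hε⟩ :=
    ((hray.filter_mono nhdsWithin_le_nhds).and (self_mem_nhdsWithin (s := Set.Ioi 0))).exists
  obtain ⟨u, hu⟩ := nonempty_Wset_of_mem_convexHull X (interior_subset hεmem)
  have hε₁ : (1 + ε)⁻¹ < 1 := inv_lt_one_of_one_lt₀ (by simp [hε])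
  have hθ_eq : m + (1 + ε)⁻¹ • (θ + ε • (θ - m) - m) = θ := by
    rw [show θ + ε • (θ - m) - m = (1 + ε) • (θ - m) by module, smul_smul,
      inv_mul_cancel₀ (by positivity), one_smul, add_sub_cancel]
  refine ⟨_, hθ_eq ▸ mix_mem_Wset hn hu (by positivity) hε₁.le, fun i => ?_⟩
  have := hu.1 i
  have : 0 < (1 - (1 + ε)⁻¹) / n := div_pos (sub_pos.2 hε₁) (by positivity)
  positivity

theorem elR_pos (hn : n ≠ 0) {θ : EuclideanSpace ℝ (Fin d)}
    (hθ : θ ∈ interior (convexHull ℝ (Set.range X))) : 0 < elR n d X θ := by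
  obtain ⟨w, hw, hw₀⟩ := exists_pos_mem_Wset hn hθ
  exact (prod_pos fun i _ => mul_pos (by positivity) (hw₀ i)).trans_le (prod_le_elR X hw)

end

theorem stmt5_general (n d : ℕ) (hn : 0 < n)
    (X : Fin n → EuclideanSpace ℝ (Fin d))
    (θ : EuclideanSpace ℝ (Fin d))
    (hθ : θ ∈ interior (convexHull ℝ (Set.range X)))
    (α : ℝ) (hα : α ∈ Set.Icc (0 : ℝ) 1) :
    elR n d X θ ≤ elR n d X (sampleMean n d X + α • (θ - sampleMean n d X)) ∧
      elln n d X (sampleMean n d X + α • (θ - sampleMean n d X)) ≤ elln n d X θ := by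
  have hR := elR_le_elR_mix (X := X) hn.ne' θ hα.1 hα.2
  refine ⟨hR, ?_⟩
  have := Real.log_le_log (elR_pos hn.ne' hθ) hR
  unfold elln
  linarith

/-- Lemma 1: For `θ ∈ Θₙ` and `α ∈ [0,1]`,
`R(θ̃ + α(θ - θ̃)) ≥ R(θ)`; equivalently `l(θ̃ + α(θ - θ̃)) ≤ l(θ)`. -/
theorem stmt5 (n d : ℕ) (hn : 0 < n) (hd : 0 < d)
    (X : Fin n → EuclideanSpace ℝ (Fin d))
    (hspan : (interior (convexHull ℝ (Set.range X))).Nonempty)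
    (θ : EuclideanSpace ℝ (Fin d))
    (hθ : θ ∈ interior (convexHull ℝ (Set.range X)))
    (α : ℝ) (hα : α ∈ Set.Icc (0 : ℝ) 1) :
    elR n d X θ ≤ elR n d X (sampleMean n d X + α • (θ - sampleMean n d X)) ∧
      elln n d X (sampleMean n d X + α • (θ - sampleMean n d X)) ≤ elln n d X θ :=
  stmt5_general n d hn X θ hθ α hα
end
end

section
/- (Abstract form of Theorem 1(iii)) Let Ω ⊆ ℝ^d be open and convex, x_0 ∈ Ω, and s > 0. Let f : Ω → ℝ be continuous with f ≥ 0, f(x_0) = 0, and with the ray-monotonicity property f(x_0 + α(x − x_0)) ≤ f(x) for all x ∈ Ω and α ∈ [0,1]. Assume further that for every x ∈ Ω with x ≠ x_0, if ζ_b := sup{ζ ≥ 0 : x_0 + ζ(x − x_0) ∈ Ω} is finite then f(x_0 + ζ(x − x_0)) → +∞ as ζ ↑ ζ_b. Then the map H : Ω → ℝ^d defined by H(x) = x_0 + (1 + f(x)/s)(x − x_0) is a bijection from Ω onto ℝ^d. -/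
set_option maxHeartbeats 1000000

/-- abstract form of Theorem 1(iii): If `Ω ⊆ ℝᵈ` is open and convex,
`x₀ ∈ Ω`, `s > 0`, and `f : Ω → ℝ` is continuous, nonnegative, vanishes at `x₀`,
is monotone along rays from `x₀`, and blows up at any finite boundary point of a
ray from `x₀`, then `H(x) = x₀ + (1 + f(x)/s)(x - x₀)` is a bijection from `Ω`
onto `ℝᵈ`. -/
theorem stmt9 (d : ℕ) (Ω : Set (EuclideanSpace ℝ (Fin d)))
    (hΩopen : IsOpen Ω) (hΩconv : Convex ℝ Ω)
    (x₀ : EuclideanSpace ℝ (Fin d)) (hx₀ : x₀ ∈ Ω)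
    (s : ℝ) (hs : 0 < s)
    (f : EuclideanSpace ℝ (Fin d) → ℝ)
    (hfc : ContinuousOn f Ω)
    (hf0 : ∀ x ∈ Ω, 0 ≤ f x)
    (hfx₀ : f x₀ = 0)
    (hray : ∀ x ∈ Ω, ∀ α ∈ Set.Icc (0 : ℝ) 1, f (x₀ + α • (x - x₀)) ≤ f x)
    (hblow : ∀ x ∈ Ω, x ≠ x₀ →
      BddAbove {ζ : ℝ | 0 ≤ ζ ∧ x₀ + ζ • (x - x₀) ∈ Ω} →
        Filter.Tendsto (fun ζ : ℝ => f (x₀ + ζ • (x - x₀)))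
          (nhdsWithin (sSup {ζ : ℝ | 0 ≤ ζ ∧ x₀ + ζ • (x - x₀) ∈ Ω})
            (Set.Iio (sSup {ζ : ℝ | 0 ≤ ζ ∧ x₀ + ζ • (x - x₀) ∈ Ω})))
          Filter.atTop) :
    Set.BijOn (fun x => x₀ + (1 + f x / s) • (x - x₀)) Ω Set.univ := by
  have hmem : ∀ (v : EuclideanSpace ℝ (Fin d)) (ζ₁ ζ₂ : ℝ), 0 ≤ ζ₁ → ζ₁ ≤ ζ₂ →
      x₀ + ζ₂ • v ∈ Ω → x₀ + ζ₁ • v ∈ Ω := by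
    intro v ζ₁ ζ₂ h0 h12 h2
    rcases eq_or_lt_of_le (h0.trans h12) with h | h2pos
    · have : ζ₁ = 0 := le_antisymm (h12.trans h.symm.le) h0
      simpa [this, ← h] using h2
    · have hα0 : 0 ≤ ζ₁ / ζ₂ := div_nonneg h0 h2pos.le
      have hα1 : ζ₁ / ζ₂ ≤ 1 := (div_le_one h2pos).2 h12
      have := hΩconv hx₀ h2 (by linarith : (0:ℝ) ≤ 1 - ζ₁/ζ₂) hα0 (by ring)
      have heq : (1 - ζ₁/ζ₂) • x₀ + (ζ₁/ζ₂) • (x₀ + ζ₂ • v) = x₀ + ζ₁ • v := by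
        have h' : (ζ₁/ζ₂) * ζ₂ = ζ₁ := div_mul_cancel₀ _ h2pos.ne'
        rw [smul_add, smul_smul, h']
        module
      rwa [heq] at this
  have hfmono : ∀ (v : EuclideanSpace ℝ (Fin d)) (ζ₁ ζ₂ : ℝ), 0 ≤ ζ₁ → ζ₁ ≤ ζ₂ →
      x₀ + ζ₂ • v ∈ Ω → f (x₀ + ζ₁ • v) ≤ f (x₀ + ζ₂ • v) := by
    intro v ζ₁ ζ₂ h0 h12 h2
    rcases eq_or_lt_of_le (h0.trans h12) with h | h2pos
    · have : ζ₁ = 0 := le_antisymm (h12.trans h.symm.le) h0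
      simp [this, ← h]
    · have hα0 : 0 ≤ ζ₁ / ζ₂ := div_nonneg h0 h2pos.le
      have hα1 : ζ₁ / ζ₂ ≤ 1 := (div_le_one h2pos).2 h12
      have := hray _ h2 (ζ₁/ζ₂) ⟨hα0, hα1⟩
      have heq : (ζ₁/ζ₂) • ((x₀ + ζ₂ • v) - x₀) = ζ₁ • v := by
        rw [add_sub_cancel_left, smul_smul, div_mul_cancel₀ _ h2pos.ne']
      rwa [heq] at this
  have hgmono : ∀ (v : EuclideanSpace ℝ (Fin d)) (ζ₁ ζ₂ : ℝ), 0 ≤ ζ₁ → ζ₁ < ζ₂ →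
      x₀ + ζ₂ • v ∈ Ω →
      ζ₁ * (1 + f (x₀ + ζ₁ • v) / s) < ζ₂ * (1 + f (x₀ + ζ₂ • v) / s) := by
    intro v ζ₁ ζ₂ h0 h12 h2
    have hf12 := hfmono v ζ₁ ζ₂ h0 h12.le h2
    have hf2 : 0 ≤ f (x₀ + ζ₂ • v) := hf0 _ h2
    have hc2 : 0 < 1 + f (x₀ + ζ₂ • v) / s := by positivity
    calc ζ₁ * (1 + f (x₀ + ζ₁ • v) / s) ≤ ζ₁ * (1 + f (x₀ + ζ₂ • v) / s) := by
          apply mul_le_mul_of_nonneg_left _ h0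
          gcongr
        _ < ζ₂ * (1 + f (x₀ + ζ₂ • v) / s) := mul_lt_mul_of_pos_right h12 hc2
  refine ⟨fun x _ => trivial, ?_, ?_⟩
  · -- injectivity
    intro x₁ h₁ x₂ h₂ heq
    simp only at heq
    set c₁ := 1 + f x₁ / s with hc₁def
    set c₂ := 1 + f x₂ / s with hc₂def
    have hc₁ : 0 < c₁ := by have := hf0 _ h₁; positivity
    have hc₂ : 0 < c₂ := by have := hf0 _ h₂; positivity
    have key : c₁ • (x₁ - x₀) = c₂ • (x₂ - x₀) := by rwa [add_right_inj] at heq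
    by_cases hx1 : x₁ = x₀
    · subst hx1
      have h0 : c₂ • (x₂ - x₁) = 0 := by rw [← key]; simp
      rcases smul_eq_zero.1 h0 with h | h
      · exact absurd h hc₂.ne'
      · exact (sub_eq_zero.1 h).symm
    · set v := x₁ - x₀ with hv
      have hx1v : x₁ = x₀ + (1:ℝ) • v := by simp [hv]
      set r := c₁ / c₂ with hr
      have hrpos : 0 < r := div_pos hc₁ hc₂
      have hrc : r * c₂ = c₁ := div_mul_cancel₀ _ hc₂.ne'
      have hx2sub : x₂ - x₀ = r • v := by
        apply smul_right_injective (EuclideanSpace ℝ (Fin d)) hc₂.ne'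
        show c₂ • (x₂ - x₀) = c₂ • (r • v)
        rw [← key, smul_smul, mul_comm, hrc]
      have hx2v : x₂ = x₀ + r • v := by rw [← hx2sub]; abel
      have hΩ1 : x₀ + (1:ℝ) • v ∈ Ω := by rw [← hx1v]; exact h₁
      have hΩr : x₀ + r • v ∈ Ω := by rw [← hx2v]; exact h₂
      rcases lt_trichotomy r 1 with h | h | h
      · have := hgmono v r 1 hrpos.le h hΩ1
        rw [← hx2v, ← hx1v] at this
        rw [← hc₂def, ← hc₁def] at this
        nlinarith
      · rw [hx1v, hx2v, h]
      · have := hgmono v 1 r zero_le_one h hΩr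
        rw [← hx2v, ← hx1v] at this
        rw [← hc₂def, ← hc₁def] at this
        nlinarith
  · -- surjectivity
    intro y _
    by_cases hy : y = x₀
    · refine ⟨x₀, hx₀, ?_⟩
      simp only [sub_self, smul_zero, add_zero, hy]
    · set v := y - x₀ with hv
      have hvne : v ≠ 0 := sub_ne_zero.2 hy
      set I := {ζ : ℝ | 0 ≤ ζ ∧ x₀ + ζ • v ∈ Ω} with hI
      have h0I : (0:ℝ) ∈ I := ⟨le_refl 0, by simpa using hx₀⟩
      have hT : ∃ T, (0 ≤ T ∧ x₀ + T • v ∈ Ω) ∧ 1 ≤ T * (1 + f (x₀ + T • v) / s) := by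
        by_cases hbdd : BddAbove I
        · have hIne : I.Nonempty := ⟨0, h0I⟩
          set b := sSup I with hb
          have hsub : ∀ t, 0 ≤ t → t < b → t ∈ I := by
            intro t ht0 htb
            obtain ⟨ζ, hζI, hζt⟩ := exists_lt_of_lt_csSup hIne htb
            exact ⟨ht0, hmem v t ζ ht0 hζt.le hζI.2⟩
          have hbpos : 0 < b := by
            have hcont : Continuous (fun ζ : ℝ => x₀ + ζ • v) := continuous_const.add (continuous_id.smul continuous_const)
            have hop : IsOpen ((fun ζ : ℝ => x₀ + ζ • v) ⁻¹' Ω) := hΩopen.preimage hcont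
            have h0pre : (0:ℝ) ∈ (fun ζ : ℝ => x₀ + ζ • v) ⁻¹' Ω := by simpa using hx₀
            obtain ⟨ε, hε, hball⟩ := Metric.isOpen_iff.1 hop 0 h0pre
            have hεI : ε/2 ∈ I := by
              refine ⟨by positivity, hball ?_⟩
              rw [Metric.mem_ball, Real.dist_eq, sub_zero,
                abs_of_pos (by positivity : (0:ℝ) < ε/2)]
              linarith
            calc (0:ℝ) < ε/2 := by positivity
              _ ≤ b := le_csSup hbdd hεI
          set x' := x₀ + (b/2) • v with hx'
          have hx'Ω : x' ∈ Ω := (hsub (b/2) (by positivity) (by linarith)).2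
          have hx'ne : x' ≠ x₀ := by
            intro h
            have h0 : (b/2) • v = 0 := by rwa [hx', add_eq_left] at h
            rcases smul_eq_zero.1 h0 with h' | h'
            · exact absurd h' (by positivity)
            · exact hvne h'
          have hx'sub : x' - x₀ = (b/2) • v := by rw [hx']; abel
          have hI'iff : ∀ ζ : ℝ, (0 ≤ ζ ∧ x₀ + ζ • (x' - x₀) ∈ Ω) ↔
              (0 ≤ ζ ∧ x₀ + (ζ * (b/2)) • v ∈ Ω) := by
            intro ζ; rw [hx'sub, smul_smul]
          have hub2 : ∀ ζ ∈ {ζ : ℝ | 0 ≤ ζ ∧ x₀ + ζ • (x' - x₀) ∈ Ω}, ζ ≤ 2 := by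
            intro ζ hζ
            obtain ⟨hζ0, hζΩ⟩ := (hI'iff ζ).1 hζ
            have hmemI : ζ * (b/2) ∈ I := ⟨by positivity, hζΩ⟩
            have := le_csSup hbdd hmemI
            nlinarith
          have hbdd' : BddAbove {ζ : ℝ | 0 ≤ ζ ∧ x₀ + ζ • (x' - x₀) ∈ Ω} := ⟨2, hub2⟩
          have hsup2 : sSup {ζ : ℝ | 0 ≤ ζ ∧ x₀ + ζ • (x' - x₀) ∈ Ω} = 2 := by
            apply csSup_eq_of_forall_le_of_forall_lt_exists_gt
            · exact ⟨0, (hI'iff 0).2 ⟨le_refl 0, by simpa using hx₀⟩⟩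
            · exact hub2
            · intro w hw
              set a := (max w 0 + 2) / 2 with ha
              have hm2 : max w 0 < 2 := max_lt hw (by norm_num)
              have hmw : w ≤ max w 0 := le_max_left _ _
              have hm0 : 0 ≤ max w 0 := le_max_right _ _
              have haw : w < a := by rw [ha]; linarith
              have ha0 : 0 ≤ a := by rw [ha]; linarith
              have ha2 : a < 2 := by rw [ha]; linarith
              refine ⟨a, (hI'iff a).2 ⟨ha0, ?_⟩, haw⟩
              exact (hsub (a * (b/2)) (by positivity) (by nlinarith)).2
          have htend := hblow x' hx'Ω hx'ne hbdd'
          rw [hsup2] at htend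
          simp only [hx'sub, smul_smul] at htend
          have hev1 := htend.eventually_ge_atTop (2*s/b)
          have hev2 : ∀ᶠ ζ : ℝ in nhdsWithin 2 (Set.Iio 2), 1 < ζ :=
            eventually_nhdsWithin_of_eventually_nhds (eventually_gt_nhds (by norm_num))
          have hev3 : ∀ᶠ ζ : ℝ in nhdsWithin 2 (Set.Iio 2), ζ ∈ Set.Iio 2 :=
            eventually_mem_nhdsWithin
          obtain ⟨ζ, ⟨hfM, h1ζ⟩, hζ2⟩ := ((hev1.and hev2).and hev3).exists
          simp only [Set.mem_Iio] at hζ2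
          have hT0' : 0 ≤ ζ * (b/2) := by nlinarith
          have hTb : ζ * (b/2) < b := by nlinarith
          refine ⟨ζ * (b/2), ⟨hT0', (hsub _ hT0' hTb).2⟩, ?_⟩
          set F := f (x₀ + (ζ * (b/2)) • v) with hF
          have h2s : 2*s ≤ F*b := (div_le_iff₀ hbpos).1 hfM
          have h1 : 2/b ≤ F/s := by rw [div_le_div_iff₀ hbpos hs]; nlinarith
          have e1 : (b/2) * (1 + 2/b) = b/2 + 1 := by field_simp
          have e2 : (b/2)*(1+2/b) ≤ (ζ*(b/2))*(1+F/s) := by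
            apply mul_le_mul (by nlinarith) (by linarith) (by positivity) (by nlinarith)
          linarith
        · obtain ⟨ζ, hζI, hζ1⟩ := not_bddAbove_iff.1 hbdd 1
          have h1Ω : x₀ + (1:ℝ) • v ∈ Ω := hmem v 1 ζ zero_le_one hζ1.le hζI.2
          have := hf0 _ h1Ω
          refine ⟨1, ⟨zero_le_one, h1Ω⟩, ?_⟩
          have : 0 ≤ f (x₀ + (1:ℝ) • v) / s := by positivity
          linarith
      obtain ⟨T, ⟨hT0, hTΩ⟩, hT1⟩ := hT
      have hcont : ContinuousOn (fun ζ : ℝ => ζ * (1 + f (x₀ + ζ • v) / s))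
          (Set.Icc 0 T) := by
        apply ContinuousOn.mul continuousOn_id
        apply ContinuousOn.add continuousOn_const
        apply ContinuousOn.div_const
        apply hfc.comp (Continuous.continuousOn (continuous_const.add (continuous_id.smul continuous_const)))
        intro ζ hζ
        exact hmem v ζ T hζ.1 hζ.2 hTΩ
      have hivt := intermediate_value_Icc hT0 hcont
      have h1mem : (1:ℝ) ∈ Set.Icc ((fun ζ : ℝ => ζ * (1 + f (x₀ + ζ • v) / s)) 0)
          ((fun ζ : ℝ => ζ * (1 + f (x₀ + ζ • v) / s)) T) := by
        constructor
        · simp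
        · simpa using hT1
      obtain ⟨ζ, hζmem, hgζ⟩ := hivt h1mem
      refine ⟨x₀ + ζ • v, hmem v ζ T hζmem.1 hζmem.2 hTΩ, ?_⟩
      simp only [add_sub_cancel_left, smul_smul]
      have hgζ' : (1 + f (x₀ + ζ • v) / s) * ζ = 1 := by
        rw [mul_comm]; simpa using hgζ
      rw [hgζ', one_smul, hv]
      abel
end

section
/- (Abstract bijection under a general expansion factor) Let Ω ⊆ ℝ^d be open and convex, x_0 ∈ Ω, and let f : Ω → ℝ be continuous with f ≥ 0, f(x_0) = 0, the ray-monotonicity property f(x_0 + α(x − x_0)) ≤ f(x) for all x ∈ Ω and α ∈ [0,1], and such that for every x ∈ Ω with x ≠ x_0, if ζ_b := sup{ζ ≥ 0 : x_0 + ζ(x − x_0) ∈ Ω} is finite then f(x_0 + ζ(x − x_0)) → +∞ as ζ ↑ ζ_b. Let γ : [0,∞) → [1,∞) be continuous, nondecreasing, with γ(t) → +∞ as t → +∞ (for example γ(t) = 1 + κ·t^δ/n^m with κ, m, δ > 0). Then H(x) = x_0 + γ(f(x))·(x − x_0) is a bijection from Ω onto ℝ^d. -/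
set_option maxHeartbeats 1000000 in
/-- abstract bijection under a general expansion factor: With `Ω`, `x₀`,
`f` as in Statement 9, and `γ : [0,∞) → [1,∞)` continuous, nondecreasing and tending
to `+∞`, the map `H(x) = x₀ + γ(f(x))·(x - x₀)` is a bijection from `Ω` onto `ℝᵈ`. -/
theorem stmt10 (d : ℕ) (Ω : Set (EuclideanSpace ℝ (Fin d)))
    (hΩopen : IsOpen Ω) (hΩconv : Convex ℝ Ω)
    (x₀ : EuclideanSpace ℝ (Fin d)) (hx₀ : x₀ ∈ Ω)
    (f : EuclideanSpace ℝ (Fin d) → ℝ)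
    (hfc : ContinuousOn f Ω)
    (hf0 : ∀ x ∈ Ω, 0 ≤ f x)
    (hfx₀ : f x₀ = 0)
    (hray : ∀ x ∈ Ω, ∀ α ∈ Set.Icc (0 : ℝ) 1, f (x₀ + α • (x - x₀)) ≤ f x)
    (hblow : ∀ x ∈ Ω, x ≠ x₀ →
      BddAbove {ζ : ℝ | 0 ≤ ζ ∧ x₀ + ζ • (x - x₀) ∈ Ω} →
        Filter.Tendsto (fun ζ : ℝ => f (x₀ + ζ • (x - x₀)))
          (nhdsWithin (sSup {ζ : ℝ | 0 ≤ ζ ∧ x₀ + ζ • (x - x₀) ∈ Ω})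
            (Set.Iio (sSup {ζ : ℝ | 0 ≤ ζ ∧ x₀ + ζ • (x - x₀) ∈ Ω})))
          Filter.atTop)
    (γ : ℝ → ℝ)
    (hγc : ContinuousOn γ (Set.Ici (0 : ℝ)))
    (hγmono : MonotoneOn γ (Set.Ici (0 : ℝ)))
    (hγ1 : ∀ t : ℝ, 0 ≤ t → 1 ≤ γ t)
    (hγtop : Filter.Tendsto γ Filter.atTop Filter.atTop) :
    Set.BijOn (fun x => x₀ + γ (f x) • (x - x₀)) Ω Set.univ := by
  classical
  -- Interval property of the ray-parameter set
  have hseg : ∀ (u : EuclideanSpace ℝ (Fin d)) (ζ ζ' : ℝ), 0 ≤ ζ' → ζ' ≤ ζ →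
      x₀ + ζ • u ∈ Ω → x₀ + ζ' • u ∈ Ω := by
    intro u ζ ζ' hζ'0 hle hmem
    rcases eq_or_lt_of_le (hζ'0.trans hle) with h0 | hζpos
    · have hz : ζ' = 0 := le_antisymm (hle.trans h0.symm.le) hζ'0
      simpa [hz] using hx₀
    · have key := hΩconv.add_smul_sub_mem hx₀ hmem
        (t := ζ'/ζ) ⟨div_nonneg hζ'0 hζpos.le, div_le_one_of_le₀ hle hζpos.le⟩
      have heq : x₀ + (ζ'/ζ) • (x₀ + ζ • u - x₀) = x₀ + ζ' • u := by
        rw [add_sub_cancel_left, smul_smul, div_mul_cancel₀ _ hζpos.ne']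
      rwa [heq] at key
  -- monotonicity of f along rays
  have hmonof : ∀ (u : EuclideanSpace ℝ (Fin d)) (ζ ζ' : ℝ), 0 ≤ ζ' → ζ' ≤ ζ →
      x₀ + ζ • u ∈ Ω → f (x₀ + ζ' • u) ≤ f (x₀ + ζ • u) := by
    intro u ζ ζ' hζ'0 hle hmem
    rcases eq_or_lt_of_le (hζ'0.trans hle) with h0 | hζpos
    · have hz : ζ' = 0 := le_antisymm (hle.trans h0.symm.le) hζ'0
      rw [hz, ← h0]
    · have key := hray (x₀ + ζ • u) hmem (ζ'/ζ)
        ⟨div_nonneg hζ'0 hζpos.le, div_le_one_of_le₀ hle hζpos.le⟩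
      have heq : x₀ + (ζ'/ζ) • (x₀ + ζ • u - x₀) = x₀ + ζ' • u := by
        rw [add_sub_cancel_left, smul_smul, div_mul_cancel₀ _ hζpos.ne']
      rwa [heq] at key
  -- the one-dimensional profile g
  set g : EuclideanSpace ℝ (Fin d) → ℝ → ℝ :=
    fun u ζ => ζ * γ (f (x₀ + ζ • u)) with hg
  -- strict monotonicity of g on the parameter set
  have hgsm : ∀ (u : EuclideanSpace ℝ (Fin d)),
      StrictMonoOn (g u) {ζ : ℝ | 0 ≤ ζ ∧ x₀ + ζ • u ∈ Ω} := by
    intro u ζ' hζ' ζ hζ hlt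
    have hA' : 1 ≤ γ (f (x₀ + ζ' • u)) := hγ1 _ (hf0 _ hζ'.2)
    have hA : 1 ≤ γ (f (x₀ + ζ • u)) := hγ1 _ (hf0 _ hζ.2)
    have hfle : f (x₀ + ζ' • u) ≤ f (x₀ + ζ • u) := hmonof u ζ ζ' hζ'.1 hlt.le hζ.2
    have hγle : γ (f (x₀ + ζ' • u)) ≤ γ (f (x₀ + ζ • u)) :=
      hγmono (hf0 _ hζ'.2) (hf0 _ hζ.2) hfle
    have h1 : g u ζ' ≤ ζ' * γ (f (x₀ + ζ • u)) :=
      mul_le_mul_of_nonneg_left hγle hζ'.1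
    have h2 : ζ' * γ (f (x₀ + ζ • u)) < ζ * γ (f (x₀ + ζ • u)) :=
      mul_lt_mul_of_pos_right hlt (lt_of_lt_of_le one_pos hA)
    exact h1.trans_lt h2
  -- continuity of g on the parameter set
  have hgc : ∀ x ∈ Ω, ContinuousOn (g (x - x₀)) {ζ : ℝ | 0 ≤ ζ ∧ x₀ + ζ • (x - x₀) ∈ Ω} := by
    intro x hx
    have hline : Continuous fun ζ : ℝ => x₀ + ζ • (x - x₀) := by continuity
    refine ContinuousOn.mul continuousOn_id ?_
    refine hγc.comp (hfc.comp hline.continuousOn ?_) ?_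
    · intro ζ hζ; exact hζ.2
    · intro ζ hζ; exact hf0 _ hζ.2
  -- g is surjective onto [0, ∞) on each ray
  have hgsurj : ∀ x ∈ Ω, x ≠ x₀ → ∀ r : ℝ, 0 ≤ r →
      ∃ ζ : ℝ, (0 ≤ ζ ∧ x₀ + ζ • (x - x₀) ∈ Ω) ∧ g (x - x₀) ζ = r := by
    intro x hx hxn r hr
    set S : Set ℝ := {ζ : ℝ | 0 ≤ ζ ∧ x₀ + ζ • (x - x₀) ∈ Ω} with hS
    have h1S : (1 : ℝ) ∈ S := ⟨zero_le_one, by simpa using hx⟩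
    have hSne : S.Nonempty := ⟨1, h1S⟩
    -- find ζ₀ ∈ S with g ζ₀ ≥ r
    have hbig : ∃ ζ₀ ∈ S, r ≤ g (x - x₀) ζ₀ := by
      by_cases hbdd : BddAbove S
      · -- blow-up case
        set b := sSup S with hb
        have hb1 : (1 : ℝ) ≤ b := le_csSup hbdd h1S
        have hbpos : (0 : ℝ) < b := lt_of_lt_of_le one_pos hb1
        have htend : Filter.Tendsto (fun ζ : ℝ => g (x - x₀) ζ)
            (nhdsWithin b (Set.Iio b)) Filter.atTop := by
          have hφ := hblow x hx hxn hbdd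
          have hγφ : Filter.Tendsto (fun ζ : ℝ => γ (f (x₀ + ζ • (x - x₀))))
              (nhdsWithin b (Set.Iio b)) Filter.atTop := hγtop.comp hφ
          have hid : Filter.Tendsto (fun ζ : ℝ => ζ)
              (nhdsWithin b (Set.Iio b)) (nhds b) :=
            (continuous_id.tendsto b).mono_left nhdsWithin_le_nhds
          exact hid.pos_mul_atTop hbpos hγφ
        have h1 : ∀ᶠ ζ in nhdsWithin b (Set.Iio b), r ≤ g (x - x₀) ζ :=
          htend.eventually_ge_atTop r
        have h2 : ∀ᶠ ζ in nhdsWithin b (Set.Iio b), ζ ∈ Set.Iio b :=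
          self_mem_nhdsWithin
        have h3 : ∀ᶠ ζ in nhdsWithin b (Set.Iio b), 0 < ζ :=
          eventually_nhdsWithin_of_eventually_nhds (eventually_gt_nhds hbpos)
        obtain ⟨ζ₀, hζ₀r, hζ₀b, hζ₀pos⟩ := (h1.and (h2.and h3)).exists
        -- ζ₀ ∈ S since ζ₀ < b = sSup S
        obtain ⟨ζ₁, hζ₁S, hζ₁gt⟩ := exists_lt_of_lt_csSup hSne hζ₀b
        exact ⟨ζ₀, ⟨hζ₀pos.le,
          hseg (x - x₀) ζ₁ ζ₀ hζ₀pos.le hζ₁gt.le hζ₁S.2⟩, hζ₀r⟩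
      · -- unbounded case
        obtain ⟨ζ₀, hζ₀S, hζ₀gt⟩ := (not_bddAbove_iff.mp hbdd) r
        refine ⟨ζ₀, hζ₀S, ?_⟩
        have hA : 1 ≤ γ (f (x₀ + ζ₀ • (x - x₀))) := hγ1 _ (hf0 _ hζ₀S.2)
        calc r ≤ ζ₀ := hζ₀gt.le
          _ = ζ₀ * 1 := (mul_one ζ₀).symm
          _ ≤ g (x - x₀) ζ₀ := mul_le_mul_of_nonneg_left hA hζ₀S.1
    obtain ⟨ζ₀, hζ₀S, hζ₀r⟩ := hbig
    -- IVT on [0, ζ₀]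
    have hIcc : Set.Icc (0 : ℝ) ζ₀ ⊆ S := by
      intro ζ hζ
      exact ⟨hζ.1, hseg (x - x₀) ζ₀ ζ hζ.1 hζ.2 hζ₀S.2⟩
    have hcont : ContinuousOn (g (x - x₀)) (Set.Icc (0 : ℝ) ζ₀) :=
      (hgc x hx).mono hIcc
    have hg0 : g (x - x₀) 0 = 0 := by simp [hg]
    have := intermediate_value_Icc hζ₀S.1 hcont
    have hrmem : r ∈ Set.Icc (g (x - x₀) 0) (g (x - x₀) ζ₀) := by
      rw [hg0]; exact ⟨hr, hζ₀r⟩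
    obtain ⟨ζ, hζmem, hζeq⟩ := this hrmem
    exact ⟨ζ, hIcc hζmem, hζeq⟩
  constructor
  · intro x _; trivial
  constructor
  · -- injectivity
    intro x hx x' hx' heq
    simp only at heq
    have heq' : γ (f x) • (x - x₀) = γ (f x') • (x' - x₀) := by
      have := heq
      rwa [add_right_inj] at this
    have hc : (1 : ℝ) ≤ γ (f x) := hγ1 _ (hf0 _ hx)
    have hc' : (1 : ℝ) ≤ γ (f x') := hγ1 _ (hf0 _ hx')
    have hcpos : (0 : ℝ) < γ (f x) := lt_of_lt_of_le one_pos hc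
    have hc'pos : (0 : ℝ) < γ (f x') := lt_of_lt_of_le one_pos hc'
    by_cases hx0 : x = x₀
    · have h0 : γ (f x') • (x' - x₀) = 0 := by
        rw [← heq', hx0, sub_self, smul_zero]
      rcases smul_eq_zero.mp h0 with h | h
      · exact absurd h hc'pos.ne'
      · exact hx0.trans (sub_eq_zero.mp h).symm
    · have hx'0 : x' ≠ x₀ := by
        intro h
        apply hx0
        have h0 : γ (f x) • (x - x₀) = 0 := by rw [heq', h, sub_self, smul_zero]
        rcases smul_eq_zero.mp h0 with h' | h'
        · exact absurd h' hcpos.ne'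
        · exact sub_eq_zero.mp h'
      set u := x - x₀ with hu
      set t := γ (f x) / γ (f x') with ht
      have htpos : 0 < t := div_pos hcpos hc'pos
      have hx'eq : x' - x₀ = t • u := by
        have h1 : γ (f x') • (x' - x₀) = γ (f x) • u := heq'.symm
        have h2 := congrArg (fun v => (γ (f x'))⁻¹ • v) h1
        simpa [smul_smul, inv_mul_cancel₀ hc'pos.ne', ht, div_eq_inv_mul]
          using h2
      have h1S : (1 : ℝ) ∈ {ζ : ℝ | 0 ≤ ζ ∧ x₀ + ζ • u ∈ Ω} :=
        ⟨zero_le_one, by simpa [hu] using hx⟩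
      have htS : t ∈ {ζ : ℝ | 0 ≤ ζ ∧ x₀ + ζ • u ∈ Ω} :=
        ⟨htpos.le, by rw [← hx'eq]; simpa using hx'⟩
      have hgv1 : g u 1 = γ (f x) := by
        have hpt : x₀ + (1 : ℝ) • u = x := by rw [one_smul, hu]; abel
        show (1 : ℝ) * γ (f (x₀ + (1 : ℝ) • u)) = γ (f x)
        rw [hpt, one_mul]
      have hgvt : g u t = γ (f x) := by
        have hpt : x₀ + t • u = x' := by rw [← hx'eq]; abel
        show t * γ (f (x₀ + t • u)) = γ (f x)
        rw [hpt, ht, div_mul_cancel₀ _ hc'pos.ne']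
      have ht1 : t = 1 := (hgsm u).injOn htS h1S (by rw [hgvt, hgv1])
      have hxx : x' - x₀ = x - x₀ := by rw [hx'eq, ht1, one_smul, hu]
      exact (sub_left_inj.mp hxx).symm
  · -- surjectivity
    intro y _
    by_cases hy : y = x₀
    · exact ⟨x₀, hx₀, by simp [hy, hfx₀]⟩
    · have hyne : y - x₀ ≠ 0 := sub_ne_zero.mpr hy
      obtain ⟨ε, hεpos, hball⟩ := Metric.isOpen_iff.mp hΩopen x₀ hx₀
      set ε' : ℝ := ε / (2 * ‖y - x₀‖) with hε'
      have hnorm : (0 : ℝ) < ‖y - x₀‖ := norm_pos_iff.mpr hyne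
      have hε'pos : 0 < ε' := div_pos hεpos (by positivity)
      set x : EuclideanSpace ℝ (Fin d) := x₀ + ε' • (y - x₀) with hxdef
      have hxΩ : x ∈ Ω := by
        apply hball
        rw [Metric.mem_ball, hxdef]
        have : dist (x₀ + ε' • (y - x₀)) x₀ = ε' * ‖y - x₀‖ := by
          rw [dist_eq_norm]; simp [norm_smul, abs_of_pos hε'pos]
        have h2 : ε' * ‖y - x₀‖ = ε / 2 := by
          rw [hε']
          field_simp
        rw [this, h2]
        linarith
      have hxne : x ≠ x₀ := by
        rw [hxdef]
        intro h
        have : ε' • (y - x₀) = 0 := by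
          have := h; rwa [add_eq_left] at this
        rcases smul_eq_zero.mp this with h' | h'
        · exact hε'pos.ne' h'
        · exact hyne h'
      have hu : x - x₀ = ε' • (y - x₀) := by rw [hxdef]; abel
      obtain ⟨ζ, hζS, hζeq⟩ := hgsurj x hxΩ hxne (1 / ε') (by positivity)
      refine ⟨x₀ + ζ • (x - x₀), hζS.2, ?_⟩
      simp only
      have harg : x₀ + ζ • (x - x₀) - x₀ = ζ • (x - x₀) := by abel
      rw [harg, smul_smul]
      have : γ (f (x₀ + ζ • (x - x₀))) * ζ = 1 / ε' := by
        rw [mul_comm]; exact hζeq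
      rw [this, hu, smul_smul, one_div, inv_mul_cancel₀ hε'pos.ne', one_smul]
      abel
end

section
/- (EEL regions are dilated OEL regions) Let Ω ⊆ ℝ^d be open and convex, x_0 ∈ Ω, and s > 0. Let f : Ω → ℝ be continuous with f ≥ 0, f(x_0) = 0, the ray-monotonicity property f(x_0 + α(x − x_0)) ≤ f(x) for all x ∈ Ω and α ∈ [0,1], and such that for every x ∈ Ω with x ≠ x_0, if ζ_b := sup{ζ ≥ 0 : x_0 + ζ(x − x_0) ∈ Ω} is finite then f(x_0 + ζ(x − x_0)) → +∞ as ζ ↑ ζ_b. Define H(x) = x_0 + (1 + f(x)/s)(x − x_0). Then for every c ≥ 0, the image under H of the sublevel set {x ∈ Ω : f(x) ≤ c} equals that sublevel set dilated about x_0 by the factor 1 + c/s, i.e. H({x ∈ Ω : f(x) ≤ c}) = {x_0 + (1 + c/s)(x − x_0) : x ∈ Ω, f(x) ≤ c}. -/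
/-- EEL regions are dilated OEL regions: With `Ω`, `x₀`, `s`, `f` as in
Statement 9 and `H(x) = x₀ + (1 + f(x)/s)(x - x₀)`, for every `c ≥ 0` the image under
`H` of the sublevel set `{x ∈ Ω : f(x) ≤ c}` equals that set dilated about `x₀` by the
factor `1 + c/s`. -/
theorem stmt11 (d : ℕ) (Ω : Set (EuclideanSpace ℝ (Fin d)))
    (hΩopen : IsOpen Ω) (hΩconv : Convex ℝ Ω)
    (x₀ : EuclideanSpace ℝ (Fin d)) (hx₀ : x₀ ∈ Ω)
    (s : ℝ) (hs : 0 < s)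
    (f : EuclideanSpace ℝ (Fin d) → ℝ)
    (hfc : ContinuousOn f Ω)
    (hf0 : ∀ x ∈ Ω, 0 ≤ f x)
    (hfx₀ : f x₀ = 0)
    (hray : ∀ x ∈ Ω, ∀ α ∈ Set.Icc (0 : ℝ) 1, f (x₀ + α • (x - x₀)) ≤ f x)
    (hblow : ∀ x ∈ Ω, x ≠ x₀ →
      BddAbove {ζ : ℝ | 0 ≤ ζ ∧ x₀ + ζ • (x - x₀) ∈ Ω} →
        Filter.Tendsto (fun ζ : ℝ => f (x₀ + ζ • (x - x₀)))
          (nhdsWithin (sSup {ζ : ℝ | 0 ≤ ζ ∧ x₀ + ζ • (x - x₀) ∈ Ω})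
            (Set.Iio (sSup {ζ : ℝ | 0 ≤ ζ ∧ x₀ + ζ • (x - x₀) ∈ Ω})))
          Filter.atTop)
    (c : ℝ) (hc : 0 ≤ c) :
    (fun x => x₀ + (1 + f x / s) • (x - x₀)) '' {x ∈ Ω | f x ≤ c} =
      (fun x => x₀ + (1 + c / s) • (x - x₀)) '' {x ∈ Ω | f x ≤ c} := by
  have hs' : s ≠ 0 := ne_of_gt hs
  ext p
  simp only [Set.mem_image, Set.mem_setOf_eq]
  constructor
  · rintro ⟨x, ⟨hxΩ, hxc⟩, rfl⟩
    have hfx := hf0 x hxΩ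
    have hsc : (0:ℝ) < s + c := by linarith
    set t : ℝ := (s + f x) / (s + c) with ht
    have ht0 : 0 ≤ t := by positivity
    have ht1 : t ≤ 1 := by rw [div_le_one hsc]; linarith
    refine ⟨x₀ + t • (x - x₀), ⟨?_, ?_⟩, ?_⟩
    · have h : x₀ + t • (x - x₀) = (1 - t) • x₀ + t • x := by module
      rw [h]
      exact hΩconv hx₀ hxΩ (by linarith) ht0 (by ring)
    · exact le_trans (hray x hxΩ t ⟨ht0, ht1⟩) hxc
    · have key : (1 + c / s) * t = 1 + f x / s := by
        rw [ht]; field_simp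
      have h2 : (x₀ + t • (x - x₀)) - x₀ = t • (x - x₀) := by abel
      simp only [h2, smul_smul, key]
  · rintro ⟨x, ⟨hxΩ, hxc⟩, rfl⟩
    by_cases hx : x = x₀
    · subst hx
      exact ⟨x, ⟨hxΩ, by rw [hfx₀]; exact hc⟩, by simp⟩
    · set S : Set ℝ := {ζ : ℝ | 0 ≤ ζ ∧ x₀ + ζ • (x - x₀) ∈ Ω} with hSdef
      have hγcont : Continuous (fun ζ : ℝ => x₀ + ζ • (x - x₀)) := by
        exact continuous_const.add (continuous_id.smul continuous_const)
      have hmem : ∀ a b : ℝ, 0 ≤ a → a ≤ b → b ∈ S → a ∈ S := by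
        intro a b ha hab hb
        rcases eq_or_lt_of_le (ha.trans hab) with h0 | h0
        · have hb0 : b = 0 := h0.symm
          have ha0 : a = 0 := le_antisymm (hb0 ▸ hab) ha
          rw [ha0, ← hb0]; exact hb
        · refine ⟨ha, ?_⟩
          have hbne : b ≠ 0 := ne_of_gt h0
          have hid : x₀ + a • (x - x₀) =
              (1 - a / b) • x₀ + (a / b) • (x₀ + b • (x - x₀)) := by
            match_scalars <;> field_simp <;> ring
          rw [hid]
          exact hΩconv hx₀ hb.2 (by rw [sub_nonneg, div_le_one h0]; exact hab)
            (by positivity) (by ring)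
      have h1S : (1:ℝ) ∈ S := by
        refine ⟨zero_le_one, ?_⟩
        have : x₀ + (1:ℝ) • (x - x₀) = x := by module
        rw [this]; exact hxΩ
      obtain ⟨ζ', hζ'1, hζ'S, hgζ'⟩ : ∃ ζ' : ℝ, 1 ≤ ζ' ∧ ζ' ∈ S ∧
          1 + c / s ≤ ζ' * (1 + f (x₀ + ζ' • (x - x₀)) / s) := by
        by_cases hbdd : BddAbove S
        · set ζb := sSup S with hζb
          have hζb1 : (1:ℝ) ≤ ζb := le_csSup hbdd h1S
          obtain ⟨δ, hδ, hδS⟩ : ∃ δ > 0, (1 + δ) ∈ S := by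
            have hpre : IsOpen ((fun ζ : ℝ => x₀ + ζ • (x - x₀)) ⁻¹' Ω) :=
              hΩopen.preimage hγcont
            have h1pre : (1:ℝ) ∈ (fun ζ : ℝ => x₀ + ζ • (x - x₀)) ⁻¹' Ω := h1S.2
            obtain ⟨ε, hε, hball⟩ := Metric.isOpen_iff.mp hpre 1 h1pre
            refine ⟨ε/2, by positivity, ⟨by linarith, hball ?_⟩⟩
            simp only [Metric.mem_ball, Real.dist_eq]
            rw [abs_of_nonneg (by linarith : (0:ℝ) ≤ 1 + ε/2 - 1)]
            linarith
          have hζbgt : 1 < ζb := lt_of_lt_of_le (by linarith) (le_csSup hbdd hδS)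
          have hblow' := hblow x hxΩ hx hbdd
          have hev : ∀ᶠ ζ in nhdsWithin ζb (Set.Iio ζb),
              (1 < ζ ∧ c < f (x₀ + ζ • (x - x₀))) ∧ ζ ∈ Set.Iio ζb := by
            filter_upwards [(eventually_gt_nhds hζbgt).filter_mono nhdsWithin_le_nhds,
              hblow'.eventually_gt_atTop c, self_mem_nhdsWithin] with ζ h1 h2 h3
            exact ⟨⟨h1, h2⟩, h3⟩
          have hne : (nhdsWithin ζb (Set.Iio ζb)).NeBot := by
            exact nhdsLT_neBot ζb
          obtain ⟨ζ', ⟨h1ζ', hfζ'⟩, hζ'lt⟩ := hev.exists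
          have hζ'S : ζ' ∈ S := by
            obtain ⟨b, hbS, hb⟩ := exists_lt_of_lt_csSup ⟨1, h1S⟩ hζ'lt
            exact hmem ζ' b (by linarith) hb.le hbS
          refine ⟨ζ', h1ζ'.le, hζ'S, ?_⟩
          have hfnn : (0:ℝ) ≤ f (x₀ + ζ' • (x - x₀)) := le_trans hc hfζ'.le
          have h1 : c / s ≤ f (x₀ + ζ' • (x - x₀)) / s := by gcongr
          nlinarith [mul_nonneg (by linarith : (0:ℝ) ≤ ζ' - 1)
            (by positivity : (0:ℝ) ≤ 1 + f (x₀ + ζ' • (x - x₀)) / s)]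
        · obtain ⟨ζ', hζ'S, hζ'⟩ := not_bddAbove_iff.mp hbdd (max 1 (1 + c/s))
          have h1 : (1:ℝ) ≤ ζ' := le_of_lt (lt_of_le_of_lt (le_max_left _ _) hζ')
          have h2 : 1 + c/s < ζ' := lt_of_le_of_lt (le_max_right _ _) hζ'
          refine ⟨ζ', h1, hζ'S, ?_⟩
          have hfnn : (0:ℝ) ≤ f (x₀ + ζ' • (x - x₀)) := hf0 _ hζ'S.2
          nlinarith [div_nonneg hfnn hs.le]
      have hcont : ContinuousOn (fun ζ : ℝ => ζ * (1 + f (x₀ + ζ • (x - x₀)) / s))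
          (Set.Icc 1 ζ') := by
        refine continuousOn_id.mul (continuousOn_const.add (ContinuousOn.div_const ?_ s))
        exact hfc.comp hγcont.continuousOn
          (fun ζ hζ => (hmem ζ ζ' (le_trans zero_le_one hζ.1) hζ.2 hζ'S).2)
      have hIVT := intermediate_value_Icc hζ'1 hcont
      have hg1 : (1:ℝ) * (1 + f (x₀ + (1:ℝ) • (x - x₀)) / s) ≤ 1 + c / s := by
        have : x₀ + (1:ℝ) • (x - x₀) = x := by module
        rw [this, one_mul]
        gcongr
      obtain ⟨ζ, hζIcc, hζeq⟩ := hIVT ⟨hg1, hgζ'⟩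
      have hζ1 : (1:ℝ) ≤ ζ := hζIcc.1
      have hζS : ζ ∈ S := hmem ζ ζ' (by linarith) hζIcc.2 hζ'S
      have hyΩ : x₀ + ζ • (x - x₀) ∈ Ω := hζS.2
      have hfy : (0:ℝ) ≤ f (x₀ + ζ • (x - x₀)) := hf0 _ hyΩ
      have heq2 : ζ * (s + f (x₀ + ζ • (x - x₀))) = s + c := by
        have h := hζeq
        field_simp at h
        linarith
      have hfyc : f (x₀ + ζ • (x - x₀)) ≤ c := by
        nlinarith [mul_nonneg (by linarith : (0:ℝ) ≤ ζ - 1)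
          (by linarith : (0:ℝ) ≤ s + f (x₀ + ζ • (x - x₀)))]
      refine ⟨x₀ + ζ • (x - x₀), ⟨hyΩ, hfyc⟩, ?_⟩
      have h2 : (x₀ + ζ • (x - x₀)) - x₀ = ζ • (x - x₀) := by abel
      have hζeq' : ζ * (1 + f (x₀ + ζ • (x - x₀)) / s) = 1 + c / s := hζeq
      simp only [h2, smul_smul]
      rw [mul_comm, hζeq']
end

section
/- (Lagrange-multiplier representation of the empirical likelihood) Let θ ∈ ℝ^d and suppose λ ∈ ℝ^d satisfies 1 + λᵀ(X_i − θ) > 0 for every i = 1, …, n and Σ_{i=1}^n (X_i − θ)/(1 + λᵀ(X_i − θ)) = 0. Then the weights w_i = 1/(n(1 + λᵀ(X_i − θ))) belong to W(θ) and maximize ∏_{i=1}^n n·w_i over W(θ), so that R(θ) = ∏_{i=1}^n (1 + λᵀ(X_i − θ))^{-1}; equivalently, l(θ) = −2·log R(θ) = 2·Σ_{i=1}^n log(1 + λᵀ(X_i − θ)). -/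
/-!
Write `cᵢ = 1 + ⟪λ, Xᵢ - θ⟫`. For every `w` with `Σ wᵢ = 1` and `Σ wᵢ (Xᵢ - θ) = 0` one has
`Σ wᵢ cᵢ = 1`, so the numbers `aᵢ = n wᵢ cᵢ ≥ 0` sum to `n`, and `aᵢ ≤ exp (aᵢ - 1)` gives
`∏ aᵢ ≤ 1`, i.e. `∏ n wᵢ ≤ ∏ cᵢ⁻¹`. The Lagrange condition, paired with `λ`, gives `Σ cᵢ⁻¹ = n`,
so `wᵢ = (n cᵢ)⁻¹` is a weight vector in `W(θ)` attaining this bound.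
-/

noncomputable section

open Finset
open scoped RealInnerProductSpace

section Weights

variable {ι : Type*} [Fintype ι]

theorem prod_le_one_of_sum_eq_card {a : ι → ℝ} (ha : ∀ i, 0 ≤ a i)
    (hsum : ∑ i, a i = Fintype.card ι) : ∏ i, a i ≤ 1 :=
  calc ∏ i, a i ≤ ∏ i, Real.exp (a i - 1) :=
        prod_le_prod (fun i _ => ha i) fun i _ => by linarith [Real.add_one_le_exp (a i - 1)]
    _ = 1 := by simp [← Real.exp_sum, sum_sub_distrib, hsum]

theorem prod_card_mul_le_prod_inv {w c : ι → ℝ} (hw : ∀ i, 0 ≤ w i) (hc : ∀ i, 0 < c i)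
    (hwc : ∑ i, w i * c i = 1) : ∏ i, (Fintype.card ι : ℝ) * w i ≤ ∏ i, (c i)⁻¹ := by
  have hprod : ∏ i, (Fintype.card ι : ℝ) * w i
      = (∏ i, (Fintype.card ι : ℝ) * w i * c i) * ∏ i, (c i)⁻¹ := by
    rw [← prod_mul_distrib]
    exact prod_congr rfl fun i _ => by field_simp [(hc i).ne']
  have hle : ∏ i, (Fintype.card ι : ℝ) * w i * c i ≤ 1 := by
    refine prod_le_one_of_sum_eq_card (fun i => by have := hw i; have := hc i; positivity) ?_
    simp_rw [mul_assoc, ← mul_sum, hwc, mul_one]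
  rw [hprod]
  exact mul_le_of_le_one_left (prod_nonneg fun i _ => (inv_pos.2 (hc i)).le) hle

variable {E : Type*} [NormedAddCommGroup E] [InnerProductSpace ℝ E]

theorem sum_smul_sub_eq_zero_iff {w : ι → ℝ} (hw : ∑ i, w i = 1) (X : ι → E) (θ : E) :
    ∑ i, w i • (X i - θ) = 0 ↔ ∑ i, w i • X i = θ := by
  simp [smul_sub, sum_sub_distrib, ← sum_smul, hw, sub_eq_zero]

theorem sum_mul_one_add_inner (v : ι → ℝ) (X : ι → E) (θ lam : E) :
    ∑ i, v i * (1 + ⟪lam, X i - θ⟫) = ∑ i, v i + ⟪lam, ∑ i, v i • (X i - θ)⟫ := by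
  simp [mul_add, sum_add_distrib, inner_sum, real_inner_smul_right]

theorem sum_mul_one_add_inner_eq_one {w : ι → ℝ} {X : ι → E} {θ : E} (hw : ∑ i, w i = 1)
    (hwX : ∑ i, w i • X i = θ) (lam : E) : ∑ i, w i * (1 + ⟪lam, X i - θ⟫) = 1 := by
  rw [sum_mul_one_add_inner, hw, (sum_smul_sub_eq_zero_iff hw X θ).2 hwX, inner_zero_right,
    add_zero]

theorem sum_inv_one_add_inner_eq_card {X : ι → E} {θ lam : E}
    (hne : ∀ i, 1 + ⟪lam, X i - θ⟫ ≠ 0)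
    (hlag : ∑ i, (1 + ⟪lam, X i - θ⟫)⁻¹ • (X i - θ) = 0) :
    ∑ i, (1 + ⟪lam, X i - θ⟫)⁻¹ = Fintype.card ι := by
  have h := sum_mul_one_add_inner (fun i => (1 + ⟪lam, X i - θ⟫)⁻¹) X θ lam
  rw [hlag, inner_zero_right, add_zero] at h
  simp [← h, inv_mul_cancel₀ (hne _)]

end Weights

theorem lagrange_weights_mem_Wset {n d : ℕ} (hn : 0 < n) {X : Fin n → EuclideanSpace ℝ (Fin d)}
    {θ lam : EuclideanSpace ℝ (Fin d)} (hpos : ∀ i, 0 < 1 + ⟪lam, X i - θ⟫)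
    (hlag : ∑ i, (1 + ⟪lam, X i - θ⟫)⁻¹ • (X i - θ) = 0) :
    (fun i => ((n : ℝ) * (1 + ⟪lam, X i - θ⟫))⁻¹) ∈ Wset n d X θ := by
  have hsum : ∑ i, ((n : ℝ) * (1 + ⟪lam, X i - θ⟫))⁻¹ = 1 := by
    simp_rw [mul_inv, ← mul_sum, sum_inv_one_add_inner_eq_card (fun i => (hpos i).ne') hlag,
      Fintype.card_fin]
    exact inv_mul_cancel₀ (by positivity)
  refine ⟨fun i => by have := hpos i; positivity, hsum, ?_⟩
  rw [← sum_smul_sub_eq_zero_iff hsum]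
  simp_rw [mul_inv, ← smul_smul, ← smul_sum, hlag, smul_zero]

open scoped RealInnerProductSpace in
theorem stmt15_general (n d : ℕ) (hn : 0 < n)
    (X : Fin n → EuclideanSpace ℝ (Fin d))
    (θ lam : EuclideanSpace ℝ (Fin d))
    (hpos : ∀ i, 0 < 1 + ⟪lam, X i - θ⟫)
    (hlag : ∑ i, (1 + ⟪lam, X i - θ⟫)⁻¹ • (X i - θ) = 0) :
    (fun i => ((n : ℝ) * (1 + ⟪lam, X i - θ⟫))⁻¹) ∈ Wset n d X θ ∧
      (∀ w ∈ Wset n d X θ,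
        ∏ i, (n : ℝ) * w i ≤
          ∏ i, (n : ℝ) * ((n : ℝ) * (1 + ⟪lam, X i - θ⟫))⁻¹) ∧
      elR n d X θ = ∏ i, (1 + ⟪lam, X i - θ⟫)⁻¹ ∧
      elln n d X θ = 2 * ∑ i, Real.log (1 + ⟪lam, X i - θ⟫) := by
  have hmem := lagrange_weights_mem_Wset hn hpos hlag
  have hprod : ∏ i, (n : ℝ) * ((n : ℝ) * (1 + ⟪lam, X i - θ⟫))⁻¹
      = ∏ i, (1 + ⟪lam, X i - θ⟫)⁻¹ := by
    simp_rw [mul_inv, mul_inv_cancel_left₀ (Nat.cast_ne_zero.2 hn.ne' : (n : ℝ) ≠ 0)]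
  have hmax : ∀ w ∈ Wset n d X θ, ∏ i, (n : ℝ) * w i ≤ ∏ i, (1 + ⟪lam, X i - θ⟫)⁻¹ := by
    rintro w ⟨hw0, hw1, hwX⟩
    simpa using prod_card_mul_le_prod_inv hw0 hpos (sum_mul_one_add_inner_eq_one hw1 hwX lam)
  have helR : elR n d X θ = ∏ i, (1 + ⟪lam, X i - θ⟫)⁻¹ :=
    IsGreatest.csSup_eq ⟨⟨_, hmem, hprod⟩, by rintro _ ⟨w, hw, rfl⟩; exact hmax w hw⟩
  refine ⟨hmem, hprod ▸ hmax, helR, ?_⟩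
  rw [elln, helR, Real.log_prod fun i _ => (inv_pos.2 (hpos i)).ne']
  simp [Real.log_inv]

open scoped RealInnerProductSpace in
/-- Lagrange-multiplier representation: If `λ ∈ ℝᵈ` satisfies
`1 + λᵀ(Xᵢ - θ) > 0` for all `i` and `Σᵢ (Xᵢ - θ)/(1 + λᵀ(Xᵢ - θ)) = 0`, then the
weights `wᵢ = 1/(n(1 + λᵀ(Xᵢ - θ)))` lie in `W(θ)` and maximize `∏ n·wᵢ` over `W(θ)`,
so that `R(θ) = ∏ (1 + λᵀ(Xᵢ - θ))⁻¹` and `l(θ) = 2 Σ log(1 + λᵀ(Xᵢ - θ))`. -/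
theorem stmt15 (n d : ℕ) (hn : 0 < n) (hd : 0 < d)
    (X : Fin n → EuclideanSpace ℝ (Fin d))
    (θ lam : EuclideanSpace ℝ (Fin d))
    (hpos : ∀ i, 0 < 1 + ⟪lam, X i - θ⟫)
    (hlag : ∑ i, (1 + ⟪lam, X i - θ⟫)⁻¹ • (X i - θ) = 0) :
    (fun i => ((n : ℝ) * (1 + ⟪lam, X i - θ⟫))⁻¹) ∈ Wset n d X θ ∧
      (∀ w ∈ Wset n d X θ,
        ∏ i, (n : ℝ) * w i ≤
          ∏ i, (n : ℝ) * ((n : ℝ) * (1 + ⟪lam, X i - θ⟫))⁻¹) ∧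
      elR n d X θ = ∏ i, (1 + ⟪lam, X i - θ⟫)⁻¹ ∧
      elln n d X θ = 2 * ∑ i, Real.log (1 + ⟪lam, X i - θ⟫) :=
  stmt15_general n d hn X θ lam hpos hlag
end
end
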